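/- Let A and B be real symmetric n×n matrices such that every row of A and every row of B is a probability vector, and every entry of B is strictly positive. For a real symmetric matrix M let λ_1(M) ≥ … ≥ λ_n(M) denote its eigenvalues listed in decreasing order with multiplicity. Then max_i |λ_i(A) − λ_i(B)| ≤ ‖A − B‖_F ≤ sqrt(2 · Σ_{i=1}^{n} KL(A_i ‖ B_i)), where A_i, B_i are the i-th rows and KL(p‖q) = Σ_j p_j log(p_j/q_j) with the convention 0·log 0 = 0. -/

import Mathlib

open Matrix

/-- The Frobenius norm of a real matrix: `‖M‖_F = (Σ_{i,j} M_{ij}²)^{1/2}`. -/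
noncomputable def frobNorm {m n : ℕ} (M : Matrix (Fin m) (Fin n) ℝ) : ℝ :=
  Real.sqrt (∑ i, ∑ j, (M i j) ^ 2)

/-- `μ` enumerates the eigenvalues of the Hermitian (real symmetric) matrix `A`
in decreasing order with multiplicity. -/
def IsDecreasingEigenvalueSeq {n : ℕ} {A : Matrix (Fin n) (Fin n) ℝ}
    (hA : A.IsHermitian) (μ : Fin n → ℝ) : Prop :=
  Antitone μ ∧ ∃ e : Equiv.Perm (Fin n), μ = hA.eigenvalues ∘ e

/-! Weyl: for the `i`-th eigenvalue, the span of the eigenvectors of `A` belonging to `λ_1, …, λ_i`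
and the span of those of `B` belonging to `λ_i, …, λ_n` have dimensions adding up to `n + 1`, so
they share a vector `y ≠ 0`. There `λ_i(A) ‖y‖² ≤ ⟪y, A y⟫` and `⟪y, B y⟫ ≤ λ_i(B) ‖y‖²`, while
Cauchy–Schwarz bounds `⟪y, (A - B) y⟫` by `‖A - B‖_F ‖y‖²`.

Pinsker-type bound: `p log (p / q) + q - p - (p - q)² / 2` is the Bregman divergence of
`x log x - x² / 2`, which is convex on `[0, 1]` since its second derivative is `1 / x - 1`. Summing
over a row, the linear terms `q - p` cancel because both rows sum to `1`. -/

open Real RealInnerProductSpace Module Set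

theorem ConvexOn.add_mul_sub_le_of_hasDerivAt {S : Set ℝ} {f : ℝ → ℝ} {f' x y : ℝ}
    (hf : ConvexOn ℝ S f) (hx : x ∈ S) (hy : y ∈ S) (hf' : HasDerivAt f f' x) :
    f x + f' * (y - x) ≤ f y := by
  rcases lt_trichotomy x y with hxy | rfl | hyx
  · have := hf.le_slope_of_hasDerivAt hx hy hxy hf'
    rw [slope_def_field, le_div_iff₀ (sub_pos.mpr hxy)] at this
    linarith
  · simp
  · have := hf.slope_le_of_hasDerivAt hy hx hyx hf'
    rw [slope_def_field, div_le_iff₀ (sub_pos.mpr hyx)] at this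
    linarith

lemma hasDerivAt_mul_log_sub_sq_div_two {x : ℝ} (hx : x ≠ 0) :
    HasDerivAt (fun x : ℝ => x * log x - x ^ 2 / 2) (log x + 1 - x) x :=
  (hasDerivAt_mul_log hx).sub (by simpa using (hasDerivAt_pow 2 x).div_const 2)

lemma convexOn_mul_log_sub_sq_div_two :
    ConvexOn ℝ (Icc 0 1) (fun x : ℝ => x * log x - x ^ 2 / 2) := by
  refine convexOn_of_hasDerivWithinAt2_nonneg (convex_Icc 0 1) (f' := fun x => log x + 1 - x)
    (f'' := fun x => x⁻¹ - 1) (continuous_mul_log.sub (by fun_prop)).continuousOn ?_ ?_ ?_ <;>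
    rw [interior_Icc] <;> intro x hx
  · exact (hasDerivAt_mul_log_sub_sq_div_two hx.1.ne').hasDerivWithinAt
  · exact (((hasDerivAt_log hx.1.ne').add_const 1).sub (hasDerivAt_id x)).hasDerivWithinAt
  · exact sub_nonneg.mpr ((one_le_inv₀ hx.1).mpr hx.2.le)

lemma sq_sub_div_two_le_mul_log_div_add_sub {p q : ℝ} (hp0 : 0 ≤ p) (hp1 : p ≤ 1)
    (hq0 : 0 < q) (hq1 : q ≤ 1) :
    (p - q) ^ 2 / 2 ≤ p * log (p / q) + q - p := by
  have h := convexOn_mul_log_sub_sq_div_two.add_mul_sub_le_of_hasDerivAt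
    ⟨hq0.le, hq1⟩ ⟨hp0, hp1⟩ (hasDerivAt_mul_log_sub_sq_div_two hq0.ne')
  have hlog : p * log (p / q) = p * log p - p * log q := by
    rcases hp0.eq_or_lt with rfl | hp
    · simp
    · rw [log_div hp.ne' hq0.ne']; ring
  rw [hlog]
  linear_combination h

lemma sum_sq_sub_le_two_mul_sum_mul_log_div {ι : Type*} [Fintype ι] {p q : ι → ℝ}
    (hp0 : ∀ j, 0 ≤ p j) (hp1 : ∑ j, p j = 1) (hq0 : ∀ j, 0 < q j) (hq1 : ∑ j, q j = 1) :
    ∑ j, (p j - q j) ^ 2 ≤ 2 * ∑ j, p j * log (p j / q j) := by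
  have le_one : ∀ {r : ι → ℝ}, (∀ j, 0 ≤ r j) → ∑ j, r j = 1 → ∀ j, r j ≤ 1 :=
    fun h0 h1 j => h1 ▸ Finset.single_le_sum (fun k _ => h0 k) (Finset.mem_univ j)
  calc ∑ j, (p j - q j) ^ 2 = 2 * ∑ j, (p j - q j) ^ 2 / 2 := by
        rw [← Finset.sum_div]; ring
    _ ≤ 2 * ∑ j, (p j * log (p j / q j) + q j - p j) := by
        gcongr with j
        exact sq_sub_div_two_le_mul_log_div_add_sub (hp0 j) (le_one hp0 hp1 j) (hq0 j)
          (le_one (fun k => (hq0 k).le) hq1 j)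
    _ = 2 * ∑ j, p j * log (p j / q j) := by
        rw [Finset.sum_sub_distrib, Finset.sum_add_distrib, hp1, hq1]; ring

lemma frobNorm_sub_le_sqrt_two_mul_sum_mul_log_div {m n : ℕ} (A B : Matrix (Fin m) (Fin n) ℝ)
    (hA0 : ∀ i j, 0 ≤ A i j) (hA1 : ∀ i, ∑ j, A i j = 1)
    (hB0 : ∀ i j, 0 < B i j) (hB1 : ∀ i, ∑ j, B i j = 1) :
    frobNorm (A - B) ≤ √(2 * ∑ i, ∑ j, A i j * log (A i j / B i j)) := by
  refine sqrt_le_sqrt ?_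
  rw [Finset.mul_sum]
  exact Finset.sum_le_sum fun i _ =>
    sum_sq_sub_le_two_mul_sum_mul_log_div (hA0 i) (hA1 i) (hB0 i) (hB1 i)

theorem Submodule.exists_mem_inf_ne_zero_of_finrank_lt_add {K V : Type*} [DivisionRing K]
    [AddCommGroup V] [Module K V] [FiniteDimensional K V] {s t : Submodule K V}
    (h : finrank K V < finrank K s + finrank K t) : ∃ x ∈ s ⊓ t, x ≠ 0 :=
  (Submodule.ne_bot_iff _).mp fun hbot =>
    h.not_ge (Submodule.finrank_add_finrank_le_of_disjoint (disjoint_iff.mpr hbot))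

namespace OrthonormalBasis

variable {ι E : Type*} [Fintype ι] [NormedAddCommGroup E] [InnerProductSpace ℝ E]
  (b : OrthonormalBasis ι ℝ E)

lemma finrank_span_image (s : Finset ι) :
    finrank ℝ (Submodule.span ℝ (b '' s)) = s.card := by
  rw [image_eq_range]
  exact (finrank_span_eq_card
    (b.orthonormal.linearIndependent.comp _ Subtype.val_injective)).trans (by simp)

lemma inner_eq_zero_of_mem_span_image {s : Set ι} {x : E}
    (hx : x ∈ Submodule.span ℝ (b '' s)) {k : ι} (hk : k ∉ s) : ⟪b k, x⟫ = 0 := by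
  induction hx using Submodule.span_induction with
  | mem y hy =>
    obtain ⟨j, hj, rfl⟩ := hy
    exact b.orthonormal.2 fun h => hk (h ▸ hj)
  | zero => exact inner_zero_right _
  | add y z _ _ hy hz => rw [inner_add_right, hy, hz, add_zero]
  | smul c y _ hy => rw [real_inner_smul_right, hy, mul_zero]

variable {b} {T : E →ₗ[ℝ] E} {α : ι → ℝ}

lemma inner_apply_self_eq_sum (hT : ∀ k, T (b k) = α k • b k) (x : E) :
    ⟪x, T x⟫ = ∑ k, α k * ⟪b k, x⟫ ^ 2 := by
  have hTx : T x = ∑ k, (α k * ⟪b k, x⟫) • b k := by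
    conv_lhs => rw [← b.sum_repr' x]
    simp [hT, smul_smul, mul_comm]
  rw [hTx, inner_sum]
  simp only [real_inner_smul_right, real_inner_comm x]
  ring_nf

lemma mul_norm_sq_le_inner_apply_self (hT : ∀ k, T (b k) = α k • b k) {s : Set ι} {m : ℝ}
    (hm : ∀ k ∈ s, m ≤ α k) {x : E} (hx : x ∈ Submodule.span ℝ (b '' s)) :
    m * ‖x‖ ^ 2 ≤ ⟪x, T x⟫ := by
  rw [inner_apply_self_eq_sum hT, ← b.sum_sq_inner_right, Finset.mul_sum]
  refine Finset.sum_le_sum fun k _ => ?_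
  by_cases hk : k ∈ s
  · exact mul_le_mul_of_nonneg_right (hm k hk) (sq_nonneg _)
  · simp [b.inner_eq_zero_of_mem_span_image hx hk]

lemma inner_apply_self_le_mul_norm_sq (hT : ∀ k, T (b k) = α k • b k) {s : Set ι} {m : ℝ}
    (hm : ∀ k ∈ s, α k ≤ m) {x : E} (hx : x ∈ Submodule.span ℝ (b '' s)) :
    ⟪x, T x⟫ ≤ m * ‖x‖ ^ 2 := by
  have h := mul_norm_sq_le_inner_apply_self (T := -T) (α := -α) (fun k => by simp [hT])
    (fun k hk => neg_le_neg (hm k hk)) hx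
  rw [LinearMap.neg_apply, inner_neg_right] at h
  linarith

end OrthonormalBasis

section Weyl

variable {E : Type*} [NormedAddCommGroup E] [InnerProductSpace ℝ E] {n : ℕ}
  {T S : E →ₗ[ℝ] E} {b c : OrthonormalBasis (Fin n) ℝ E} {α β : Fin n → ℝ}

theorem sub_le_of_inner_sub_apply_self_le (hα : Antitone α) (hβ : Antitone β)
    (hT : ∀ k, T (b k) = α k • b k) (hS : ∀ k, S (c k) = β k • c k) {C : ℝ}
    (hC : ∀ x, ⟪x, (T - S) x⟫ ≤ C * ‖x‖ ^ 2) (i : Fin n) : α i - β i ≤ C := by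
  have : FiniteDimensional ℝ E := b.toBasis.finiteDimensional_of_finite
  have hE : finrank ℝ E = n := by simpa using finrank_eq_card_basis b.toBasis
  obtain ⟨y, ⟨hyb, hyc⟩, hy0⟩ := Submodule.exists_mem_inf_ne_zero_of_finrank_lt_add
    (s := Submodule.span ℝ (b '' Finset.Iic i)) (t := Submodule.span ℝ (c '' Finset.Ici i)) (by
      rw [b.finrank_span_image, c.finrank_span_image, Fin.card_Iic, Fin.card_Ici, hE]
      omega)
  have hTy := OrthonormalBasis.mul_norm_sq_le_inner_apply_self hT
    (fun k hk => hα (Finset.mem_Iic.mp hk)) hyb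
  have hSy := OrthonormalBasis.inner_apply_self_le_mul_norm_sq hS
    (fun k hk => hβ (Finset.mem_Ici.mp hk)) hyc
  have hCy := hC y
  rw [LinearMap.sub_apply, inner_sub_right] at hCy
  exact le_of_mul_le_mul_right (by linarith) (by positivity : 0 < ‖y‖ ^ 2)

theorem abs_sub_le_of_abs_inner_sub_apply_self_le (hα : Antitone α) (hβ : Antitone β)
    (hT : ∀ k, T (b k) = α k • b k) (hS : ∀ k, S (c k) = β k • c k) {C : ℝ}
    (hC : ∀ x, |⟪x, (T - S) x⟫| ≤ C * ‖x‖ ^ 2) (i : Fin n) : |α i - β i| ≤ C := by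
  refine abs_sub_le_iff.mpr ⟨sub_le_of_inner_sub_apply_self_le hα hβ hT hS
    (fun x => (le_abs_self _).trans (hC x)) i, sub_le_of_inner_sub_apply_self_le hβ hα hS hT
    (fun x => ?_) i⟩
  rw [← neg_sub T S, LinearMap.neg_apply, inner_neg_right]
  exact (neg_le_abs _).trans (hC x)

end Weyl

lemma norm_toEuclideanLin_le_frobNorm {m n : ℕ} (M : Matrix (Fin m) (Fin n) ℝ)
    (x : EuclideanSpace ℝ (Fin n)) : ‖toEuclideanLin M x‖ ≤ frobNorm M * ‖x‖ := by
  rw [EuclideanSpace.norm_eq, EuclideanSpace.norm_eq, frobNorm, ← sqrt_mul (by positivity),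
    Finset.sum_mul]
  refine sqrt_le_sqrt (Finset.sum_le_sum fun i _ => ?_)
  simpa [toLpLin_apply, Matrix.mulVec, dotProduct] using
    Finset.sum_mul_sq_le_sq_mul_sq Finset.univ (M i) x

lemma abs_inner_toEuclideanLin_self_le {n : ℕ} (M : Matrix (Fin n) (Fin n) ℝ)
    (x : EuclideanSpace ℝ (Fin n)) : |⟪x, toEuclideanLin M x⟫| ≤ frobNorm M * ‖x‖ ^ 2 :=
  calc |⟪x, toEuclideanLin M x⟫| ≤ ‖x‖ * ‖toEuclideanLin M x‖ := abs_real_inner_le_norm _ _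
    _ ≤ ‖x‖ * (frobNorm M * ‖x‖) := by gcongr; exact norm_toEuclideanLin_le_frobNorm M x
    _ = frobNorm M * ‖x‖ ^ 2 := by ring

lemma Matrix.IsHermitian.toEuclideanLin_eigenvectorBasis {ι : Type*} [Fintype ι] [DecidableEq ι]
    {A : Matrix ι ι ℝ} (hA : A.IsHermitian) (j : ι) :
    toEuclideanLin A (hA.eigenvectorBasis j) = hA.eigenvalues j • hA.eigenvectorBasis j := by
  rw [toLpLin_apply, hA.mulVec_eigenvectorBasis]
  rfl

namespace IsDecreasingEigenvalueSeq

variable {n : ℕ} {A B : Matrix (Fin n) (Fin n) ℝ} {hA : A.IsHermitian} {hB : B.IsHermitian}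
  {μA μB : Fin n → ℝ}

lemma exists_orthonormalBasis (hμA : IsDecreasingEigenvalueSeq hA μA) :
    ∃ b : OrthonormalBasis (Fin n) ℝ (EuclideanSpace ℝ (Fin n)),
      ∀ k, toEuclideanLin A (b k) = μA k • b k := by
  obtain ⟨-, e, rfl⟩ := hμA
  exact ⟨hA.eigenvectorBasis.reindex e.symm, fun k => by
    simpa using hA.toEuclideanLin_eigenvectorBasis (e k)⟩

lemma abs_sub_le_frobNorm (hμA : IsDecreasingEigenvalueSeq hA μA)
    (hμB : IsDecreasingEigenvalueSeq hB μB) (i : Fin n) :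
    |μA i - μB i| ≤ frobNorm (A - B) := by
  obtain ⟨b, hb⟩ := hμA.exists_orthonormalBasis
  obtain ⟨c, hc⟩ := hμB.exists_orthonormalBasis
  refine abs_sub_le_of_abs_inner_sub_apply_self_le hμA.1 hμB.1 hb hc (fun x => ?_) i
  simpa [map_sub] using abs_inner_toEuclideanLin_self_le (A - B) x

end IsDecreasingEigenvalueSeq

/-- **Spectral convergence.**  For real symmetric matrices `A, B` whose rows are probability
vectors, with all entries of `B` strictly positive, the decreasingly-ordered eigenvalues
satisfy `max_i |λ_i(A) - λ_i(B)| ≤ ‖A - B‖_F ≤ sqrt(2 · Σ_i KL(A_i ‖ B_i))`, where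
`KL(p‖q) = Σ_j p_j log(p_j/q_j)` with the convention `0·log 0 = 0`. -/
theorem spectral_convergence {n : ℕ}
    (A B : Matrix (Fin n) (Fin n) ℝ) (hA : A.IsHermitian) (hB : B.IsHermitian)
    (hA0 : ∀ i j, 0 ≤ A i j) (hA1 : ∀ i, ∑ j, A i j = 1)
    (hB0 : ∀ i j, 0 < B i j) (hB1 : ∀ i, ∑ j, B i j = 1)
    (μA μB : Fin n → ℝ)
    (hμA : IsDecreasingEigenvalueSeq hA μA)
    (hμB : IsDecreasingEigenvalueSeq hB μB) :
    (∀ i, |μA i - μB i| ≤ frobNorm (A - B)) ∧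
      frobNorm (A - B) ≤ Real.sqrt (2 * ∑ i, ∑ j, A i j * Real.log (A i j / B i j)) :=
  ⟨hμA.abs_sub_le_frobNorm hμB, frobNorm_sub_le_sqrt_two_mul_sum_mul_log_div A B hA0 hA1 hB0 hB1⟩
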